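/- (Waveform Time Span Theorem.) Let a > 0, T_s ∈ ℝ, τ > 0, and X_A = X_{1A} < X_{2A} < X_{1B} < X_{2B} = X_B, and set ΔX = X_{1B} − X_{2A} (the width of the overlapping region). Let u, p̂₁, p̂₂ be as follows: u is a classical solution of the 1-D wave equation with speed a on [X_A, X_B] × [T_s, T_s + τ]; p̂₁ is a classical solution on [X_{1A}, X_{1B}] × [T_s, T_s + τ] with initial data p̂₁(·,T_s) = u(·,T_s), ∂p̂₁/∂t(·,T_s) = ∂u/∂t(·,T_s), Dirichlet data p̂₁(X_{1A},t) = u(X_{1A},t), and zero flux ∂p̂₁/∂x(X_{1B},t) = 0; p̂₂ is a classical solution on [X_{2A}, X_{2B}] × [T_s, T_s + τ] with initial data p̂₂(·,T_s) = u(·,T_s), ∂p̂₂/∂t(·,T_s) = ∂u/∂t(·,T_s), Dirichlet data p̂₂(X_{2B},t) = u(X_{2B},t), and zero flux ∂p̂₂/∂x(X_{2A},t) = 0. Then: (i) the supremum over x ∈ [X_{2A}, X_{1B}] of min(X_{1B} − x, x − X_{2A})/a equals ΔX/(2a), and it is attained exactly at the midpoint x_m = (X_{2A} + X_{1B})/2;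 and (ii) at the midpoint x_m, p̂₁(x_m, t) = p̂₂(x_m, t) = u(x_m, t) for all t ∈ [T_s, T_s + τ] with t − T_s ≤ ΔX/(2a). In other words, the waveform time span guaranteed by finite propagation speed at any overlap point is at most ΔX/(2a), i.e. half the minimum time the wave needs to transmit through the overlapping region. -/

import Mathlib

/-- `p` is a classical solution of the 1-D wave equation with speed `a` on
`[c, d] × [T₀, T₁]`: it is twice continuously differentiable on an open
neighbourhood of the rectangle and satisfies
`∂²p/∂t² = a² ∂²p/∂x²` there. -/
def IsWaveSolution (a c d T₀ T₁ : ℝ) (p : ℝ → ℝ → ℝ) : Prop :=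
  ∃ U : Set (ℝ × ℝ), IsOpen U ∧ (Set.Icc c d ×ˢ Set.Icc T₀ T₁) ⊆ U ∧
    ContDiffOn ℝ 2 (fun q : ℝ × ℝ => p q.1 q.2) U ∧
    ∀ x ∈ Set.Icc c d, ∀ t ∈ Set.Icc T₀ T₁,
      deriv (deriv (fun s => p x s)) t = a ^ 2 * deriv (deriv (fun y => p y t)) x

/-!
The difference `W = p̂ - u` of two solutions with the same Cauchy data solves the wave equation
with zero Cauchy data. Along a characteristic line of slope `b = ±a` the Riemann invariant
`∂ₜW - b ∂ₓW = DW (-b, 1)` is constant: its derivative in the direction `(b, 1)` is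
`∂ₜ²W - b² ∂ₓ²W = 0`, by symmetry of the second derivative. Both invariants vanish at the initial
time, so `∂ₜW = 0` on the backward cone of `(x, t)` as long as `[x - a(t - Tₛ), x + a(t - Tₛ)]`
stays inside the sub-domain, and then `W(x, t) = 0`. For the midpoint of the overlap that cone
stays inside both sub-domains while `a(t - Tₛ) ≤ ΔX / 2`, so their boundary data never enter.
-/

open Set Filter Topology

section Slices

variable {F : Type*} [NormedAddCommGroup F] [NormedSpace ℝ F] {W : ℝ × ℝ → F}
  {W' : ℝ × ℝ →L[ℝ] F} {U : Set (ℝ × ℝ)} {x t : ℝ}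

theorem HasFDerivAt.hasDerivAt_timeSlice (h : HasFDerivAt W W' (x, t)) :
    HasDerivAt (fun s => W (x, s)) (W' (0, 1)) t :=
  h.comp_hasDerivAt t ((hasDerivAt_const t x).prodMk (hasDerivAt_id t))

theorem HasFDerivAt.hasDerivAt_spaceSlice (h : HasFDerivAt W W' (x, t)) :
    HasDerivAt (fun y => W (y, t)) (W' (1, 0)) x :=
  h.comp_hasDerivAt x ((hasDerivAt_id x).prodMk (hasDerivAt_const x t))

theorem ContDiffOn.deriv_deriv_timeSlice (hU : IsOpen U) (hW : ContDiffOn ℝ 2 W U)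
    (hxt : (x, t) ∈ U) :
    deriv (deriv fun s => W (x, s)) t = fderiv ℝ (fderiv ℝ W) (x, t) (0, 1) (0, 1) := by
  have hderiv : deriv (fun s => W (x, s)) =ᶠ[𝓝 t] fun s => fderiv ℝ W (x, s) (0, 1) := by
    filter_upwards [(hU.preimage (by fun_prop : Continuous fun s : ℝ => (x, s))).mem_nhds hxt]
      with s hs
    exact ((hW.differentiableOn (by norm_num)).differentiableAt
      (hU.mem_nhds hs)).hasFDerivAt.hasDerivAt_timeSlice.deriv
  have hW' : DifferentiableAt ℝ (fderiv ℝ W) (x, t) :=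
    ((hW.contDiffAt (hU.mem_nhds hxt)).fderiv_right (m := 1) le_rfl).differentiableAt
      one_ne_zero
  rw [hderiv.deriv_eq]
  simpa using (hW'.hasFDerivAt.hasDerivAt_timeSlice.clm_apply (hasDerivAt_const t (0, 1))).deriv

theorem ContDiffOn.deriv_deriv_spaceSlice (hU : IsOpen U) (hW : ContDiffOn ℝ 2 W U)
    (hxt : (x, t) ∈ U) :
    deriv (deriv fun y => W (y, t)) x = fderiv ℝ (fderiv ℝ W) (x, t) (1, 0) (1, 0) := by
  have hderiv : deriv (fun y => W (y, t)) =ᶠ[𝓝 x] fun y => fderiv ℝ W (y, t) (1, 0) := by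
    filter_upwards [(hU.preimage (by fun_prop : Continuous fun y : ℝ => (y, t))).mem_nhds hxt]
      with y hy
    exact ((hW.differentiableOn (by norm_num)).differentiableAt
      (hU.mem_nhds hy)).hasFDerivAt.hasDerivAt_spaceSlice.deriv
  have hW' : DifferentiableAt ℝ (fderiv ℝ W) (x, t) :=
    ((hW.contDiffAt (hU.mem_nhds hxt)).fderiv_right (m := 1) le_rfl).differentiableAt
      one_ne_zero
  rw [hderiv.deriv_eq]
  simpa using (hW'.hasFDerivAt.hasDerivAt_spaceSlice.clm_apply (hasDerivAt_const x (1, 0))).deriv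

theorem fderiv_eq_zero_of_slices (hx : HasDerivAt (fun y => W (y, t)) 0 x)
    (ht : HasDerivAt (fun s => W (x, s)) 0 t) (hW : DifferentiableAt ℝ W (x, t)) :
    fderiv ℝ W (x, t) = 0 := by
  have h10 := hW.hasFDerivAt.hasDerivAt_spaceSlice.unique hx
  have h01 := hW.hasFDerivAt.hasDerivAt_timeSlice.unique ht
  ext <;> simpa

end Slices

theorem IsSymmSndFDerivAt.fderiv_fderiv_characteristic_eq_zero {W : ℝ × ℝ → ℝ} {q : ℝ × ℝ} {a b : ℝ}
    (hsymm : IsSymmSndFDerivAt ℝ W q)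
    (hwave : fderiv ℝ (fderiv ℝ W) q (0, 1) (0, 1) = a ^ 2 * fderiv ℝ (fderiv ℝ W) q (1, 0) (1, 0))
    (hb : b ^ 2 = a ^ 2) :
    fderiv ℝ (fderiv ℝ W) q (b, 1) (-b, 1) = 0 := by
  have hdecomp (c : ℝ) : ((c, 1) : ℝ × ℝ) = c • ((1 : ℝ), (0 : ℝ)) + ((0 : ℝ), (1 : ℝ)) := by
    ext <;> simp
  rw [hdecomp b, hdecomp (-b)]
  simp only [map_add, map_smul, add_apply, smul_apply, smul_eq_mul]
  linear_combination hwave + b * hsymm (1, 0) (0, 1) - fderiv ℝ (fderiv ℝ W) q (1, 0) (1, 0) * hb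

theorem ContDiffOn.fderiv_apply_characteristic_eq_zero {W : ℝ × ℝ → ℝ} {U : Set (ℝ × ℝ)}
    {a b c d T₀ T₁ x t : ℝ} (hW : ContDiffOn ℝ 2 W U) (hU : IsOpen U)
    (hRU : Icc c d ×ˢ Icc T₀ T₁ ⊆ U)
    (hwave : ∀ q ∈ Icc c d ×ˢ Icc T₀ T₁,
      fderiv ℝ (fderiv ℝ W) q (0, 1) (0, 1) = a ^ 2 * fderiv ℝ (fderiv ℝ W) q (1, 0) (1, 0))
    (hinit : ∀ y ∈ Ioo c d, fderiv ℝ W (y, T₀) = 0) (hb : |b| = a)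
    (ht : t ∈ Icc T₀ T₁) (hc : c < x - a * (t - T₀)) (hd : x + a * (t - T₀) < d) :
    fderiv ℝ W (x, t) (-b, 1) = 0 := by
  set γ : ℝ → ℝ × ℝ := fun σ => (x + b * (σ - t), σ)
  have hγ_fst : ∀ σ ∈ Icc T₀ t, x + b * (σ - t) ∈ Ioo c d := by
    intro σ hσ
    have : |b * (σ - t)| ≤ a * (t - T₀) := by
      rw [abs_mul, hb, abs_of_nonpos (by linarith [hσ.2])]
      exact mul_le_mul_of_nonneg_left (by linarith [hσ.1]) (hb ▸ abs_nonneg b)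
    constructor <;> linarith [abs_le.1 this]
  have hγ_mem (σ : ℝ) (hσ : σ ∈ Icc T₀ t) : γ σ ∈ Icc c d ×ˢ Icc T₀ T₁ :=
    ⟨Ioo_subset_Icc_self (hγ_fst σ hσ), hσ.1, hσ.2.trans ht.2⟩
  have hφ (σ : ℝ) (hσ : σ ∈ Icc T₀ t) :
      HasDerivAt (fun σ => fderiv ℝ W (γ σ) (-b, 1)) 0 σ := by
    have hWσ := hW.contDiffAt (hU.mem_nhds (hRU (hγ_mem σ hσ)))
    have hγ' : HasDerivAt γ (b, 1) σ := by
      simpa using ((((hasDerivAt_id σ).sub_const t).const_mul b).const_add x).prodMk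
        (hasDerivAt_id σ)
    have hchar := (hWσ.isSymmSndFDerivAt (by simp)).fderiv_fderiv_characteristic_eq_zero (b := b)
      (hwave _ (hγ_mem σ hσ)) (by rw [← hb, sq_abs])
    have hD := ((hWσ.fderiv_right (m := 1) le_rfl).differentiableAt
      one_ne_zero).hasFDerivAt.comp_hasDerivAt σ hγ' |>.clm_apply
        (hasDerivAt_const σ ((-b, 1) : ℝ × ℝ))
    rwa [map_zero, add_zero, hchar] at hD
  have hconst := constant_of_has_deriv_right_zero
    (fun σ hσ => (hφ σ hσ).continuousAt.continuousWithinAt)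
    (fun σ hσ => (hφ σ (Ico_subset_Icc_self hσ)).hasDerivWithinAt) t ⟨ht.1, le_rfl⟩
  simpa [γ, hinit _ (hγ_fst T₀ ⟨le_rfl, ht.1⟩)] using hconst

theorem ContDiffOn.fderiv_apply_time_eq_zero {W : ℝ × ℝ → ℝ} {U : Set (ℝ × ℝ)}
    {a c d T₀ T₁ x t : ℝ} (hW : ContDiffOn ℝ 2 W U) (hU : IsOpen U)
    (hRU : Icc c d ×ˢ Icc T₀ T₁ ⊆ U)
    (hwave : ∀ q ∈ Icc c d ×ˢ Icc T₀ T₁,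
      fderiv ℝ (fderiv ℝ W) q (0, 1) (0, 1) = a ^ 2 * fderiv ℝ (fderiv ℝ W) q (1, 0) (1, 0))
    (hinit : ∀ y ∈ Ioo c d, fderiv ℝ W (y, T₀) = 0) (ha : 0 ≤ a)
    (ht : t ∈ Icc T₀ T₁) (hc : c < x - a * (t - T₀)) (hd : x + a * (t - T₀) < d) :
    fderiv ℝ W (x, t) (0, 1) = 0 := by
  have hplus := hW.fderiv_apply_characteristic_eq_zero hU hRU hwave hinit (abs_of_nonneg ha)
    ht hc hd
  have hminus := hW.fderiv_apply_characteristic_eq_zero hU hRU hwave hinit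
    (by rw [abs_neg, abs_of_nonneg ha]) ht hc hd
  have hsum : (2 : ℝ) • ((0 : ℝ), (1 : ℝ)) = (-a, 1) + (- -a, 1) := by
    ext <;> norm_num
  have := congrArg (fderiv ℝ W (x, t)) hsum
  rw [map_smul, map_add, hplus, hminus] at this
  simpa using this

namespace IsWaveSolution

variable {a c d T₀ T₁ : ℝ} {p u : ℝ → ℝ → ℝ}

theorem mono {c' d' : ℝ} (hp : IsWaveSolution a c d T₀ T₁ p) (hc : c ≤ c') (hd : d' ≤ d) :
    IsWaveSolution a c' d' T₀ T₁ p := by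
  obtain ⟨U, hU, hRU, hp, hwave⟩ := hp
  exact ⟨U, hU, (prod_mono (Icc_subset_Icc hc hd) subset_rfl).trans hRU, hp,
    fun x hx => hwave x (Icc_subset_Icc hc hd hx)⟩

theorem contDiffAt_timeSlice {x t : ℝ} (hp : IsWaveSolution a c d T₀ T₁ p)
    (hx : x ∈ Icc c d) (ht : t ∈ Icc T₀ T₁) : ContDiffAt ℝ 2 (fun s => p x s) t := by
  obtain ⟨U, hU, hRU, hp, -⟩ := hp
  exact (hp.contDiffAt (hU.mem_nhds (hRU ⟨hx, ht⟩))).comp t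
    (contDiffAt_const.prodMk contDiffAt_id)

theorem contDiffAt_spaceSlice {x t : ℝ} (hp : IsWaveSolution a c d T₀ T₁ p)
    (hx : x ∈ Icc c d) (ht : t ∈ Icc T₀ T₁) : ContDiffAt ℝ 2 (fun y => p y t) x := by
  obtain ⟨U, hU, hRU, hp, -⟩ := hp
  exact (hp.contDiffAt (hU.mem_nhds (hRU ⟨hx, ht⟩))).comp x
    (contDiffAt_id.prodMk contDiffAt_const)

theorem sub (hp : IsWaveSolution a c d T₀ T₁ p) (hu : IsWaveSolution a c d T₀ T₁ u) :
    IsWaveSolution a c d T₀ T₁ (fun x t => p x t - u x t) := by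
  obtain ⟨U, hU, hRU, hpU, hpwave⟩ := id hp
  obtain ⟨V, hV, hRV, huV, huwave⟩ := id hu
  refine ⟨U ∩ V, hU.inter hV, subset_inter hRU hRV,
    (hpU.mono inter_subset_left).sub (huV.mono inter_subset_right), fun x hx t ht => ?_⟩
  have hdd {f : ℝ → ℝ} : deriv (deriv f) = iteratedDeriv 2 f := by
    rw [iteratedDeriv_succ, iteratedDeriv_one]
  simp only [hdd] at hpwave huwave ⊢
  rw [iteratedDeriv_fun_sub (hp.contDiffAt_timeSlice hx ht) (hu.contDiffAt_timeSlice hx ht),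
    iteratedDeriv_fun_sub (hp.contDiffAt_spaceSlice hx ht) (hu.contDiffAt_spaceSlice hx ht),
    hpwave x hx t ht, huwave x hx t ht, mul_sub]

theorem eq_zero_of_cone {w : ℝ → ℝ → ℝ} {x t : ℝ} (hw : IsWaveSolution a c d T₀ T₁ w)
    (ha : 0 < a) (hinit : ∀ y ∈ Icc c d, w y T₀ = 0)
    (hinit' : ∀ y ∈ Icc c d, deriv (fun s => w y s) T₀ = 0) (ht : t ∈ Icc T₀ T₁)
    (hc : c ≤ x - a * (t - T₀)) (hd : x + a * (t - T₀) ≤ d) :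
    w x t = 0 := by
  obtain ⟨U, hU, hRU, hW, hwave⟩ := hw
  set W : ℝ × ℝ → ℝ := fun q => w q.1 q.2
  have hWdiff {q : ℝ × ℝ} (hq : q ∈ Icc c d ×ˢ Icc T₀ T₁) : DifferentiableAt ℝ W q :=
    (hW.contDiffAt (hU.mem_nhds (hRU hq))).differentiableAt two_ne_zero
  have hwave' : ∀ q ∈ Icc c d ×ˢ Icc T₀ T₁,
      fderiv ℝ (fderiv ℝ W) q (0, 1) (0, 1) = a ^ 2 * fderiv ℝ (fderiv ℝ W) q (1, 0) (1, 0) := by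
    rintro ⟨y, s⟩ hq
    rw [← hW.deriv_deriv_timeSlice hU (hRU hq), ← hW.deriv_deriv_spaceSlice hU (hRU hq)]
    exact hwave y hq.1 s hq.2
  have hbottom : ∀ y ∈ Ioo c d, fderiv ℝ W (y, T₀) = 0 := by
    intro y hy
    have hyT₀ : (y, T₀) ∈ Icc c d ×ˢ Icc T₀ T₁ :=
      ⟨Ioo_subset_Icc_self hy, le_rfl, ht.1.trans ht.2⟩
    refine fderiv_eq_zero_of_slices ?_ ?_ (hWdiff hyT₀)
    · refine (hasDerivAt_const y 0).congr_of_eventuallyEq ?_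
      filter_upwards [isOpen_Ioo.mem_nhds hy] with y' hy'
      exact hinit y' (Ioo_subset_Icc_self hy')
    · have h := (hWdiff hyT₀).hasFDerivAt.hasDerivAt_timeSlice
      exact h.congr_deriv (h.deriv.symm.trans (hinit' y hyT₀.1))
  have hspan : 0 ≤ a * (t - T₀) := mul_nonneg ha.le (sub_nonneg.2 ht.1)
  have hmem {σ : ℝ} (hσ : σ ∈ Icc T₀ t) : (x, σ) ∈ Icc c d ×ˢ Icc T₀ T₁ :=
    ⟨⟨by linarith, by linarith⟩, hσ.1, hσ.2.trans ht.2⟩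
  have htime (σ : ℝ) (hσ : σ ∈ Ico T₀ t) : fderiv ℝ W (x, σ) (0, 1) = 0 := by
    have hlt : a * (σ - T₀) < a * (t - T₀) := by gcongr; exact hσ.2
    exact hW.fderiv_apply_time_eq_zero hU hRU hwave' hbottom ha.le
      ⟨hσ.1, hσ.2.le.trans ht.2⟩ (by linarith) (by linarith)
  have hconst := constant_of_has_deriv_right_zero (f := fun s => W (x, s))
    (fun σ hσ =>
      (hWdiff (hmem hσ)).hasFDerivAt.hasDerivAt_timeSlice.continuousAt.continuousWithinAt)
    (fun σ hσ => by
      simpa [htime σ hσ] using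
        (hWdiff (hmem (Ico_subset_Icc_self hσ))).hasFDerivAt.hasDerivAt_timeSlice.hasDerivWithinAt)
    t ⟨ht.1, le_rfl⟩
  simpa [W, hconst] using hinit x (hmem ⟨ht.1, le_rfl⟩).1

theorem eq_of_cone {x t : ℝ} (hp : IsWaveSolution a c d T₀ T₁ p)
    (hu : IsWaveSolution a c d T₀ T₁ u) (ha : 0 < a) (hinit : ∀ y ∈ Icc c d, p y T₀ = u y T₀)
    (hinit' : ∀ y ∈ Icc c d, deriv (fun s => p y s) T₀ = deriv (fun s => u y s) T₀)
    (ht : t ∈ Icc T₀ T₁) (hc : c ≤ x - a * (t - T₀)) (hd : x + a * (t - T₀) ≤ d) :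
    p x t = u x t := by
  have hT₀ : T₀ ∈ Icc T₀ T₁ := ⟨le_rfl, ht.1.trans ht.2⟩
  refine sub_eq_zero.1 <| (hp.sub hu).eq_zero_of_cone ha (fun y hy => sub_eq_zero.2 (hinit y hy))
    (fun y hy => ?_) ht hc hd
  rw [deriv_fun_sub ((hp.contDiffAt_timeSlice hy hT₀).differentiableAt two_ne_zero)
    ((hu.contDiffAt_timeSlice hy hT₀).differentiableAt two_ne_zero), hinit' y hy, sub_self]

end IsWaveSolution

theorem min_sub_sub_le_half (c d x : ℝ) : min (d - x) (x - c) ≤ (d - c) / 2 := by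
  rcases le_total (d - x) (x - c) with h | h
  · rw [min_eq_left h]; linarith
  · rw [min_eq_right h]; linarith

theorem min_sub_sub_eq_half_iff {c d x : ℝ} :
    min (d - x) (x - c) = (d - c) / 2 ↔ x = (c + d) / 2 := by
  constructor
  · intro h
    rcases min_choice (d - x) (x - c) with h' | h' <;> linarith
  · rintro rfl
    rw [show d - (c + d) / 2 = (d - c) / 2 by ring, show (c + d) / 2 - c = (d - c) / 2 by ring,
      min_self]

theorem isGreatest_image_min_sub_sub_div {a c d : ℝ} (ha : 0 ≤ a) (hcd : c ≤ d) :
    IsGreatest ((fun x => min (d - x) (x - c) / a) '' Icc c d) ((d - c) / (2 * a)) := by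
  refine ⟨⟨(c + d) / 2, ⟨by linarith, by linarith⟩, ?_⟩, ?_⟩
  · dsimp only
    rw [min_sub_sub_eq_half_iff.2 rfl, div_div]
  · rintro _ ⟨x, -, rfl⟩
    rw [← div_div]
    exact div_le_div_of_nonneg_right (min_sub_sub_le_half c d x) ha

theorem min_sub_sub_div_eq_iff {a c d x : ℝ} (ha : a ≠ 0) :
    min (d - x) (x - c) / a = (d - c) / (2 * a) ↔ x = (c + d) / 2 := by
  rw [← div_div, div_left_inj' ha, min_sub_sub_eq_half_iff]

theorem waveform_time_span_theorem_general
    (a T_s τ X_A X1A X2A X1B X2B X_B : ℝ)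
    (ha : 0 < a)
    (hA : X_A = X1A) (h1 : X1A < X2A) (h2 : X2A < X1B) (h3 : X1B < X2B)
    (hB : X2B = X_B)
    (u phat₁ phat₂ : ℝ → ℝ → ℝ)
    (hu : IsWaveSolution a X_A X_B T_s (T_s + τ) u)
    (hp₁ : IsWaveSolution a X1A X1B T_s (T_s + τ) phat₁)
    (hp₂ : IsWaveSolution a X2A X2B T_s (T_s + τ) phat₂)
    (hinit₁ : ∀ x ∈ Set.Icc X1A X1B, phat₁ x T_s = u x T_s)
    (hinit₁' : ∀ x ∈ Set.Icc X1A X1B,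
      deriv (fun s => phat₁ x s) T_s = deriv (fun s => u x s) T_s)
    (hinit₂ : ∀ x ∈ Set.Icc X2A X2B, phat₂ x T_s = u x T_s)
    (hinit₂' : ∀ x ∈ Set.Icc X2A X2B,
      deriv (fun s => phat₂ x s) T_s = deriv (fun s => u x s) T_s) :
    IsGreatest ((fun x => min (X1B - x) (x - X2A) / a) '' Set.Icc X2A X1B)
      ((X1B - X2A) / (2 * a)) ∧
    (∀ x ∈ Set.Icc X2A X1B,
      (min (X1B - x) (x - X2A) / a = (X1B - X2A) / (2 * a) ↔
        x = (X2A + X1B) / 2)) ∧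
    (∀ t ∈ Set.Icc T_s (T_s + τ), t - T_s ≤ (X1B - X2A) / (2 * a) →
      phat₁ ((X2A + X1B) / 2) t = u ((X2A + X1B) / 2) t ∧
      phat₂ ((X2A + X1B) / 2) t = u ((X2A + X1B) / 2) t) := by
  refine ⟨isGreatest_image_min_sub_sub_div ha.le h2.le, fun x _ => min_sub_sub_div_eq_iff ha.ne',
    fun t ht hspan => ?_⟩
  subst hA hB
  have hcone : (t - T_s) * (2 * a) ≤ X1B - X2A := (le_div_iff₀ (by positivity)).1 hspan
  exact ⟨hp₁.eq_of_cone (hu.mono le_rfl h3.le) ha hinit₁ hinit₁' ht (by linarith) (by linarith),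
    hp₂.eq_of_cone (hu.mono h1.le le_rfl) ha hinit₂ hinit₂' ht (by linarith) (by linarith)⟩

/-- Waveform Time Span Theorem: the time span guaranteed by finite propagation
speed at an overlap point x, namely min(X₁B − x, x − X₂A)/a, has supremum
ΔX/(2a) over the overlap (ΔX = X₁B − X₂A), attained exactly at the midpoint;
and at the midpoint both predictive solutions equal the true solution for all
t with t − Tₛ ≤ ΔX/(2a). -/
theorem waveform_time_span_theorem
    (a T_s τ X_A X1A X2A X1B X2B X_B : ℝ)
    (ha : 0 < a) (hτ : 0 < τ)
    (hA : X_A = X1A) (h1 : X1A < X2A) (h2 : X2A < X1B) (h3 : X1B < X2B)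
    (hB : X2B = X_B)
    (u phat₁ phat₂ : ℝ → ℝ → ℝ)
    (hu : IsWaveSolution a X_A X_B T_s (T_s + τ) u)
    (hp₁ : IsWaveSolution a X1A X1B T_s (T_s + τ) phat₁)
    (hp₂ : IsWaveSolution a X2A X2B T_s (T_s + τ) phat₂)
    (hinit₁ : ∀ x ∈ Set.Icc X1A X1B, phat₁ x T_s = u x T_s)
    (hinit₁' : ∀ x ∈ Set.Icc X1A X1B,
      deriv (fun s => phat₁ x s) T_s = deriv (fun s => u x s) T_s)
    (hDir₁ : ∀ t ∈ Set.Icc T_s (T_s + τ), phat₁ X1A t = u X1A t)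
    (hzero₁ : ∀ t ∈ Set.Icc T_s (T_s + τ), deriv (fun y => phat₁ y t) X1B = 0)
    (hinit₂ : ∀ x ∈ Set.Icc X2A X2B, phat₂ x T_s = u x T_s)
    (hinit₂' : ∀ x ∈ Set.Icc X2A X2B,
      deriv (fun s => phat₂ x s) T_s = deriv (fun s => u x s) T_s)
    (hDir₂ : ∀ t ∈ Set.Icc T_s (T_s + τ), phat₂ X2B t = u X2B t)
    (hzero₂ : ∀ t ∈ Set.Icc T_s (T_s + τ), deriv (fun y => phat₂ y t) X2A = 0) :
    IsGreatest ((fun x => min (X1B - x) (x - X2A) / a) '' Set.Icc X2A X1B)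
      ((X1B - X2A) / (2 * a)) ∧
    (∀ x ∈ Set.Icc X2A X1B,
      (min (X1B - x) (x - X2A) / a = (X1B - X2A) / (2 * a) ↔
        x = (X2A + X1B) / 2)) ∧
    (∀ t ∈ Set.Icc T_s (T_s + τ), t - T_s ≤ (X1B - X2A) / (2 * a) →
      phat₁ ((X2A + X1B) / 2) t = u ((X2A + X1B) / 2) t ∧
      phat₂ ((X2A + X1B) / 2) t = u ((X2A + X1B) / 2) t) :=
  waveform_time_span_theorem_general a T_s τ X_A X1A X2A X1B X2B X_B ha hA h1 h2 h3 hB u phat₁ phat₂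
    hu hp₁ hp₂ hinit₁ hinit₁' hinit₂ hinit₂'
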